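/- arXiv:1405.0340 — 4 statements merged into one kernel-verified Lean document; each statement's English description precedes it below -/
import Mathlib

section
/- If A ⊂ ℂ is a closed discrete infinite subset and h is a biholomorphic automorphism of ℂ \ A of infinite order, then h is of the form h(z) = z + b for some nonzero complex number b. -/
/-!
Near a point `a ∈ A` an injective holomorphic `h` omits a whole disc: the image of a small disc
around a nearby regular point `z₁` is open, and injectivity keeps points close to `a` out of it.
So `1 / (h - w)` is bounded near `a` and has a removable singularity. A pole is impossible,
since near a pole `h` takes every large value, while `A` is unbounded and avoided by `h`. Hence
`h` and `g` extend to entire functions that are mutually inverse, i.e. to an automorphism of `ℂ`,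
which is affine: `1 / H (1 / z)` is holomorphic at `0`, so `H` grows at most linearly.
Finally `H z = c z + b` preserves `A`. If `c ≠ 1`, `H` has a fixed point `p`, and the orbit of a
point of `A \ {p}` under `H` or `H⁻¹` stays in a compact disc, so it is finite by discreteness;
this forces `c ^ n = 1` and `h^[n] = id`, contradicting infinite order.
-/

open Filter Set Function Topology Bornology Asymptotics Metric

section Codiscrete

variable {X : Type*} [TopologicalSpace X]

lemma mem_nhdsNE_of_mem_codiscrete {s : Set X} (hs : s ∈ codiscrete X) (x : X) :
    s ∈ 𝓝[≠] x := by
  simpa using disjoint_principal_right.mp (mem_codiscrete.mp hs x)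

lemma dense_of_mem_codiscrete [∀ x : X, (𝓝[≠] x).NeBot] {s : Set X} (hs : s ∈ codiscrete X) :
    Dense s := fun x =>
  mem_closure_iff_frequently.mpr
    ((Eventually.frequently (mem_nhdsNE_of_mem_codiscrete hs x)).filter_mono nhdsWithin_le_nhds)

lemma finite_inter_of_compl_mem_codiscrete {A K : Set X} (hA : Aᶜ ∈ codiscrete X)
    (hK : IsCompact K) : (K ∩ A).Finite := by
  simpa [sdiff_compl] using
    hK.finite_sdiff_of_mem_codiscreteWithin (codiscreteWithin_mono (subset_univ K) hA)

lemma not_isBounded_of_compl_mem_codiscrete {Y : Type*} [PseudoMetricSpace Y] [ProperSpace Y]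
    {A : Set Y} (hA : Aᶜ ∈ codiscrete Y) (hinf : A.Infinite) : ¬IsBounded A := fun hb =>
  hinf <| (finite_inter_of_compl_mem_codiscrete hA hb.isCompact_closure).subset
    (subset_inter subset_closure subset_rfl)

end Codiscrete

lemma Set.EqOn.iterate {α : Type*} {f g : α → α} {s : Set α} (hfg : EqOn f g s)
    (hf : MapsTo f s s) (n : ℕ) : EqOn f^[n] g^[n] s := by
  induction n with
  | zero => exact fun _ _ => rfl
  | succ n ih =>
    intro z hz
    rw [iterate_succ_apply, iterate_succ_apply, ih (hf hz), hfg hz]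

lemma Function.LeftInverse.preimage_eq_of_mapsTo_compl {α : Type*} {f g : α → α} {s : Set α}
    (hgf : LeftInverse g f) (hf : MapsTo f sᶜ sᶜ) (hg : MapsTo g sᶜ sᶜ) : f ⁻¹' s = s := by
  ext z
  refine ⟨fun hz => by_contra fun hz' => hf hz' hz, fun hz => by_contra fun hfz => ?_⟩
  exact hg hfz (by rwa [hgf z])

lemma leftInverse_of_eqOn_dense {X : Type*} [TopologicalSpace X] [T2Space X] {s : Set X}
    {H G h g : X → X} (hs : Dense s) (hH : Continuous H) (hG : Continuous G)
    (hHh : EqOn H h s) (hGg : EqOn G g s) (hmaps : MapsTo h s s)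
    (hgh : ∀ z ∈ s, g (h z) = z) : LeftInverse G H :=
  congrFun <| Continuous.ext_on hs (hG.comp hH) continuous_id fun z hz => by
    rw [hHh hz, hGg (hmaps hz), hgh z hz]

lemma AnalyticAt.nhds_le_map_nhds_of_injOn {f : ℂ → ℂ} {z₀ : ℂ} {U : Set ℂ}
    (hf : AnalyticAt ℂ f z₀) (hU : U ∈ 𝓝 z₀) (hinj : InjOn f U) :
    𝓝 (f z₀) ≤ map f (𝓝 z₀) := by
  refine hf.eventually_constant_or_nhds_le_map_nhds.resolve_left fun hconst => ?_
  obtain ⟨z, ⟨hzU, hz⟩, hne⟩ :=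
    Filter.nonempty_of_mem (inter_mem (nhdsWithin_le_nhds (inter_mem hU hconst))
      (self_mem_nhdsWithin : {z₀}ᶜ ∈ 𝓝[≠] z₀))
  exact hne (hinj hzU (mem_of_mem_nhds hU) hz)

lemma Complex.analyticAt_update_of_tendsto {E : Type*} [NormedAddCommGroup E] [NormedSpace ℂ E]
    [CompleteSpace E] {φ : ℂ → E} {a : ℂ} {b : E}
    (hd : ∀ᶠ z in 𝓝[≠] a, DifferentiableAt ℂ φ z) (hb : Tendsto φ (𝓝[≠] a) (𝓝 b)) :
    AnalyticAt ℂ (update φ a b) a := by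
  refine Complex.analyticAt_of_differentiable_on_punctured_nhds_of_continuousAt ?_
    (continuousAt_update_same.mpr hb)
  filter_upwards [hd, self_mem_nhdsWithin] with z hz hza
  exact hz.congr_of_eventuallyEq <|
    Filter.mem_of_superset (isOpen_ne.mem_nhds hza) fun y hy => update_of_ne hy _ _

lemma exists_forall_nhdsNE_le_norm_sub_of_injOn {f : ℂ → ℂ} {U : Set ℂ} {a : ℂ} (hU : IsOpen U)
    (haU : U ∈ 𝓝[≠] a) (hf : DifferentiableOn ℂ f U) (hinj : InjOn f U) :
    ∃ w, ∃ δ > 0, ∀ᶠ z in 𝓝[≠] a, δ ≤ ‖f z - w‖ := by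
  obtain ⟨z₁, hz₁U, hz₁a⟩ :=
    Filter.nonempty_of_mem (inter_mem haU (self_mem_nhdsWithin : {a}ᶜ ∈ 𝓝[≠] a))
  have hρ : 0 < dist z₁ a / 2 := half_pos (dist_pos.mpr hz₁a)
  have hU₁ : U ∈ 𝓝 z₁ := hU.mem_nhds hz₁U
  have himg : f '' (U ∩ ball z₁ (dist z₁ a / 2)) ∈ 𝓝 (f z₁) :=
    (hf.analyticAt hU₁).nhds_le_map_nhds_of_injOn hU₁ hinj
      (image_mem_map (inter_mem hU₁ (ball_mem_nhds z₁ hρ)))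
  obtain ⟨δ, hδ, hball⟩ := Metric.mem_nhds_iff.mp himg
  refine ⟨f z₁, δ, hδ, ?_⟩
  filter_upwards [haU, nhdsWithin_le_nhds (ball_mem_nhds a hρ)] with z hzU hza
  by_contra! hlt
  obtain ⟨z', ⟨hz'U, hz'⟩, hfz'⟩ := hball (by rwa [mem_ball, dist_eq_norm])
  obtain rfl := hinj hz'U hzU hfz'
  rw [mem_ball] at hz' hza
  linarith [dist_triangle z₁ z' a, dist_comm z₁ z']

lemma nhdsNE_le_map_nhdsNE_of_tendsto {φ : ℂ → ℂ} {a b : ℂ}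
    (hd : ∀ᶠ z in 𝓝[≠] a, DifferentiableAt ℂ φ z) (hb : Tendsto φ (𝓝[≠] a) (𝓝 b))
    (hne : ∀ᶠ z in 𝓝[≠] a, φ z ≠ b) : 𝓝[≠] b ≤ map φ (𝓝[≠] a) := by
  have hupd : ∀ᶠ z in 𝓝[≠] a, update φ a b z = φ z := update_eventuallyEq_nhdsNE φ a a b
  have hopen : 𝓝 b ≤ map (update φ a b) (𝓝 a) := by
    have h := (Complex.analyticAt_update_of_tendsto hd hb).eventually_constant_or_nhds_le_map_nhds
    rw [update_self] at h
    refine h.resolve_left fun hconst => ?_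
    obtain ⟨z, hzb, hz, hzφ⟩ :=
      (hne.and ((eventually_nhdsWithin_of_eventually_nhds hconst).and hupd)).exists
    simp_all
  intro V hV
  rw [← insert_mem_nhds_iff]
  refine mem_of_superset (hopen (image_mem_map (insert_mem_nhds_iff.mpr hV))) ?_
  rintro _ ⟨z, rfl | hz, rfl⟩
  · simp
  · by_cases hza : z = a
    · simp [hza]
    · simpa [update_of_ne hza] using Or.inr hz

lemma isBoundedUnder_norm_of_eventually_notMem {f : ℂ → ℂ} {a w : ℂ} {δ : ℝ} {S : Set ℂ}
    (hd : ∀ᶠ z in 𝓝[≠] a, DifferentiableAt ℂ f z) (hδ : 0 < δ)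
    (hsep : ∀ᶠ z in 𝓝[≠] a, δ ≤ ‖f z - w‖) (hS : ¬IsBounded S)
    (hmaps : ∀ᶠ z in 𝓝[≠] a, f z ∉ S) :
    IsBoundedUnder (· ≤ ·) (𝓝[≠] a) (fun z => ‖f z‖) := by
  set φ : ℂ → ℂ := fun z => (f z - w)⁻¹ with hφ
  have hfw : ∀ᶠ z in 𝓝[≠] a, f z - w ≠ 0 :=
    hsep.mono fun z hz => norm_pos_iff.mp (hδ.trans_le hz)
  have hφd : ∀ᶠ z in 𝓝[≠] a, DifferentiableAt ℂ φ z :=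
    (hd.and hfw).mono fun z hz => (hz.1.sub_const w).inv hz.2
  have hφb : IsBoundedUnder (· ≤ ·) (𝓝[≠] a) (fun z => ‖φ z - φ a‖) :=
    ⟨δ⁻¹ + ‖φ a‖, eventually_map.2 <| hsep.mono fun z hz =>
      (norm_sub_le _ _).trans (add_le_add_left (by simpa [φ] using inv_anti₀ hδ hz) _)⟩
  have hL := Complex.tendsto_limUnder_of_differentiable_on_punctured_nhds_of_bounded_under hφd hφb
  set L := limUnder (𝓝[≠] a) φ
  rcases eq_or_ne L 0 with hL0 | hL0
  · -- `f` takes every large value near `a`, in particular some value in `S`.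
    exfalso
    have hmap := nhdsNE_le_map_nhdsNE_of_tendsto hφd (hL0 ▸ hL) (hfw.mono fun _ => inv_ne_zero)
    have himg : φ '' {z | f z ∉ S} ∈ 𝓝[≠] 0 :=
      hmap (mem_map.2 (mem_of_superset hmaps (subset_preimage_image φ _)))
    have hψ : Tendsto (fun v => (v - w)⁻¹) (cobounded ℂ) (𝓝[≠] 0) :=
      tendsto_inv₀_cobounded'.comp (tendsto_sub_const_cobounded w)
    have hS' : ∃ᶠ v in cobounded ℂ, v ∈ S := hS
    obtain ⟨v, hvS, z, hz, hzv⟩ := (hS'.and_eventually (hψ himg)).exists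
    exact hz (by rwa [show f z = v by simpa [φ] using hzv])
  · refine ⟨‖w‖ + 2 / ‖L‖, eventually_map.2 ?_⟩
    filter_upwards [hL.norm.eventually (lt_mem_nhds (half_lt_self (norm_pos_iff.2 hL0)))]
      with z hz
    rw [hφ, norm_inv] at hz
    have hpos : 0 < ‖f z - w‖ := inv_pos.mp ((half_pos (norm_pos_iff.2 hL0)).trans hz)
    calc ‖f z‖ ≤ ‖w‖ + ‖f z - w‖ := by simpa using norm_add_le w (f z - w)
      _ ≤ ‖w‖ + 2 / ‖L‖ := by
        rw [← inv_div]
        linarith [(lt_inv_comm₀ (by positivity) hpos).mp hz]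

lemma exists_differentiable_eqOn_of_isBoundedUnder {E : Type*} [NormedAddCommGroup E]
    [NormedSpace ℂ E] [CompleteSpace E] {A : Set ℂ} (hA : Aᶜ ∈ codiscrete ℂ) {f : ℂ → E}
    (hf : DifferentiableOn ℂ f Aᶜ)
    (hb : ∀ a ∈ A, IsBoundedUnder (· ≤ ·) (𝓝[≠] a) (fun z => ‖f z‖)) :
    ∃ F : ℂ → E, Differentiable ℂ F ∧ EqOn F f Aᶜ := by
  classical
  have hopen : IsOpen Aᶜ := (mem_codiscrete'.mp hA).1
  refine ⟨A.piecewise (fun z => limUnder (𝓝[≠] z) f) f, fun z => ?_,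
    fun z hz => piecewise_eq_of_notMem _ _ _ hz⟩
  by_cases hz : z ∈ A
  · have hd : ∀ᶠ y in 𝓝[≠] z, DifferentiableAt ℂ f y :=
      Filter.mem_of_superset (mem_nhdsNE_of_mem_codiscrete hA z) fun y hy =>
        hf.differentiableAt (hopen.mem_nhds hy)
    obtain ⟨C, hC⟩ := hb z hz
    have hL := Complex.tendsto_limUnder_of_differentiable_on_punctured_nhds_of_bounded_under hd
      ⟨C + ‖f z‖, eventually_map.2 <| (eventually_map.1 hC).mono fun y hy =>
        (norm_sub_le _ _).trans (by linarith)⟩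
    refine (Complex.analyticAt_update_of_tendsto hd hL).differentiableAt.congr_of_eventuallyEq ?_
    filter_upwards [insert_mem_nhds_iff.mpr (mem_nhdsNE_of_mem_codiscrete hA z)] with y hy
    rcases hy with rfl | hy
    · simp [hz]
    · rw [piecewise_eq_of_notMem _ _ _ hy, update_of_ne (ne_of_mem_of_not_mem hz hy).symm]
  · exact (hf.differentiableAt (hopen.mem_nhds hz)).congr_of_eventuallyEq <|
      Filter.mem_of_superset (hopen.mem_nhds hz) fun y hy => piecewise_eq_of_notMem _ _ _ hy

lemma exists_differentiable_eqOn_of_injOn {A : Set ℂ} (hA : Aᶜ ∈ codiscrete ℂ)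
    (hinf : A.Infinite) {f : ℂ → ℂ} (hf : DifferentiableOn ℂ f Aᶜ) (hmaps : MapsTo f Aᶜ Aᶜ)
    (hinj : InjOn f Aᶜ) : ∃ F : ℂ → ℂ, Differentiable ℂ F ∧ EqOn F f Aᶜ := by
  have hopen : IsOpen Aᶜ := (mem_codiscrete'.mp hA).1
  refine exists_differentiable_eqOn_of_isBoundedUnder hA hf fun a _ => ?_
  have hU := mem_nhdsNE_of_mem_codiscrete hA a
  obtain ⟨w, δ, hδ, hsep⟩ := exists_forall_nhdsNE_le_norm_sub_of_injOn hopen hU hf hinj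
  exact isBoundedUnder_norm_of_eventually_notMem
    (Filter.mem_of_superset hU fun z hz => hf.differentiableAt (hopen.mem_nhds hz)) hδ hsep
    (not_isBounded_of_compl_mem_codiscrete hA hinf)
    (Filter.mem_of_superset hU fun z hz => hmaps hz)

lemma tendsto_cobounded_of_leftInverse {X Y : Type*} [PseudoMetricSpace X] [PseudoMetricSpace Y]
    [ProperSpace Y] {H : X → Y} {G : Y → X} (hG : Continuous G) (hGH : LeftInverse G H) :
    Tendsto H (cobounded X) (cobounded Y) := by
  intro s hs
  have hb : IsBounded sᶜ := by rwa [isBounded_def, compl_compl]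
  rw [mem_map, ← compl_compl (H ⁻¹' s), ← isBounded_def, ← preimage_compl]
  exact (hb.isCompact_closure.image hG).isBounded.subset fun z hz =>
    ⟨H z, subset_closure hz, hGH z⟩

lemma Differentiable.isBigO_of_tendsto_cobounded {G : ℂ → ℂ} (hG : Differentiable ℂ G)
    (hGt : Tendsto G (cobounded ℂ) (cobounded ℂ)) : (fun z => z) =O[cobounded ℂ] G := by
  -- `L` extends holomorphically to `0` with value `0`, so `L u = O(u)`; now substitute `u = 1 / v`.
  set L : ℂ → ℂ := fun u => (G u⁻¹)⁻¹
  have hGinv := hGt.comp tendsto_inv₀_nhdsNE_zero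
  have hLd : ∀ᶠ u in 𝓝[≠] 0, DifferentiableAt ℂ L u := by
    filter_upwards [self_mem_nhdsWithin, hGinv.eventually (eventually_ne_cobounded 0)]
      with u hu hGu
    exact ((hG _).comp u (differentiableAt_inv hu)).inv hGu
  have hO := (Complex.analyticAt_update_of_tendsto hLd
    (tendsto_inv₀_cobounded.comp hGinv)).differentiableAt.isBigO_sub.comp_tendsto
    tendsto_inv₀_cobounded
  have hGO : (fun v => (G v)⁻¹) =O[cobounded ℂ] (fun v : ℂ => v⁻¹) := by
    refine hO.congr' ?_ (by simp [Function.comp_def])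
    filter_upwards [eventually_ne_cobounded 0] with v hv
    simp [L, update_of_ne (inv_ne_zero hv)]
  simpa using hGO.inv_rev <| (hGt.eventually (eventually_ne_cobounded 0)).mono fun v hv h => by
    simp_all

lemma exists_eq_mul_add_of_isBigO {H : ℂ → ℂ} (hH : Differentiable ℂ H)
    (hO : H =O[cobounded ℂ] (fun z => z)) : ∃ c b : ℂ, ∀ z, H z = c * z + b := by
  set D := dslope H 0
  have hD : Differentiable ℂ D := fun z =>
    ((Complex.differentiableOn_dslope univ_mem).mpr hH.differentiableOn).differentiableAt univ_mem
  obtain ⟨C, hC⟩ := hO.bound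
  have hbd : IsBounded (range D) := by
    rw [hD.continuous.isBounded_range_iff_isBigO, ← Metric.cobounded_eq_cocompact]
    refine IsBigO.of_bound (C + ‖H 0‖) ?_
    filter_upwards [hC, tendsto_norm_cobounded_atTop.eventually_ge_atTop 1] with z hz h1
    have hDz : ‖z‖ * ‖D z‖ = ‖H z - H 0‖ := by
      rw [← norm_smul, ← sub_smul_dslope, sub_zero]
    have := norm_sub_le (H z) (H 0)
    simp only [Pi.one_apply, norm_one, mul_one]
    refine le_of_mul_le_mul_left ?_ (one_pos.trans_le h1)
    nlinarith [norm_nonneg (H 0)]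
  refine ⟨D 0, H 0, fun z => ?_⟩
  have : (z - 0) • D z = H z - H 0 := sub_smul_dslope H 0 z
  rw [hD.apply_eq_apply_of_bounded hbd z 0, sub_zero, smul_eq_mul] at this
  linear_combination -this

lemma exists_eq_mul_add_of_leftInverse {H G : ℂ → ℂ} (hH : Differentiable ℂ H)
    (hG : Differentiable ℂ G) (hGH : LeftInverse G H) (hHG : LeftInverse H G) :
    ∃ c b : ℂ, c ≠ 0 ∧ ∀ z, H z = c * z + b := by
  have hO : H =O[cobounded ℂ] (fun z => z) := by
    have hGO := hG.isBigO_of_tendsto_cobounded (tendsto_cobounded_of_leftInverse hH.continuous hHG)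
    simpa [Function.comp_def, hGH _] using
      hGO.comp_tendsto (tendsto_cobounded_of_leftInverse hG.continuous hGH)
  obtain ⟨c, b, hcb⟩ := exists_eq_mul_add_of_isBigO hH hO
  refine ⟨c, b, fun hc => ?_, hcb⟩
  simpa using hGH.injective (a₁ := 0) (a₂ := 1) (by simp [hcb, hc])

lemma iterate_add_mul_sub (p c : ℂ) (n : ℕ) :
    (fun z => p + c * (z - p))^[n] = fun z => p + c ^ n * (z - p) := by
  induction n with
  | zero => funext z; simp
  | succ n ih => funext z; rw [iterate_succ', comp_apply, ih]; ring

lemma exists_pow_eq_one_of_mapsTo {A : Set ℂ} (hA : Aᶜ ∈ codiscrete ℂ) {p a d : ℂ} (ha : a ∈ A)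
    (hap : a ≠ p) (hd0 : d ≠ 0) (hd : ‖d‖ ≤ 1) (hmaps : MapsTo (fun z => p + d * (z - p)) A A) :
    ∃ n, 0 < n ∧ d ^ n = 1 := by
  have horb : ∀ n : ℕ, p + d ^ n * (a - p) ∈ closedBall p ‖a - p‖ ∩ A := fun n => by
    refine ⟨?_, by simpa [iterate_add_mul_sub] using hmaps.iterate n ha⟩
    rw [mem_closedBall, dist_eq_norm, add_sub_cancel_left, norm_mul, norm_pow]
    exact mul_le_of_le_one_left (norm_nonneg _) (pow_le_one₀ (norm_nonneg d) hd)
  obtain ⟨m, k, hmk, heq⟩ := (finite_inter_of_compl_mem_codiscrete hA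
    (isCompact_closedBall p ‖a - p‖)).exists_lt_map_eq_of_forall_mem horb
  refine ⟨k - m, Nat.sub_pos_of_lt hmk, mul_left_cancel₀ (pow_ne_zero m hd0) ?_⟩
  rw [mul_one, ← pow_add, Nat.add_sub_cancel' hmk.le]
  exact mul_right_cancel₀ (sub_ne_zero.mpr hap) (by simpa using heq.symm)

lemma eq_one_or_exists_iterate_eq_id {A : Set ℂ} (hA : Aᶜ ∈ codiscrete ℂ) (hinf : A.Infinite)
    {c b : ℂ} (hc : c ≠ 0) (hpre : (fun z => c * z + b) ⁻¹' A = A) :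
    c = 1 ∨ ∃ n, 0 < n ∧ (fun z => c * z + b)^[n] = id := by
  refine or_iff_not_imp_left.mpr fun hc1 => ?_
  have h1c : 1 - c ≠ 0 := sub_ne_zero.mpr (Ne.symm hc1)
  set p := b / (1 - c)
  have hfix : (fun z => c * z + b) = fun z => p + c * (z - p) := by
    funext z; simp only [p]; field_simp; ring
  rw [hfix] at hpre ⊢
  obtain ⟨a, haA, hap⟩ := (hinf.sdiff (finite_singleton p)).nonempty
  have hfwd : MapsTo (fun z => p + c * (z - p)) A A := fun z hz => by rwa [← hpre] at hz
  have hbwd : MapsTo (fun z => p + c⁻¹ * (z - p)) A A := fun z hz => by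
    rw [← hpre]; simpa [mul_inv_cancel_left₀ hc] using hz
  obtain ⟨n, hn, hcn⟩ : ∃ n, 0 < n ∧ c ^ n = 1 := by
    rcases le_or_gt ‖c‖ 1 with h | h
    · exact exists_pow_eq_one_of_mapsTo hA haA hap hc h hfwd
    · obtain ⟨n, hn, h1⟩ := exists_pow_eq_one_of_mapsTo hA haA hap (inv_ne_zero hc)
        (by rw [norm_inv]; exact inv_le_one_of_one_le₀ h.le) hbwd
      exact ⟨n, hn, by rwa [inv_pow, inv_eq_one] at h1⟩
  exact ⟨n, hn, by rw [iterate_add_mul_sub]; funext z; simp [hcn]⟩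

/-- If `A ⊂ ℂ` is closed, discrete and infinite and `h` is a biholomorphic automorphism
of `ℂ \ A` (with holomorphic inverse `g`) of infinite order, then `h(z) = z + b` for some
nonzero `b`. -/
theorem stmt1 (A : Set ℂ) (hA : IsClosed A) (hdisc : DiscreteTopology A)
    (hinf : A.Infinite) (h g : ℂ → ℂ)
    (hmaps : Set.MapsTo h Aᶜ Aᶜ) (gmaps : Set.MapsTo g Aᶜ Aᶜ)
    (hhol : DifferentiableOn ℂ h Aᶜ) (ghol : DifferentiableOn ℂ g Aᶜ)
    (hgh : ∀ z ∈ Aᶜ, g (h z) = z) (hhg : ∀ z ∈ Aᶜ, h (g z) = z)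
    (hord : ∀ n : ℕ, 1 ≤ n → ∃ z ∈ Aᶜ, h^[n] z ≠ z) :
    ∃ b : ℂ, b ≠ 0 ∧ ∀ z ∈ Aᶜ, h z = z + b := by
  have hcod : Aᶜ ∈ codiscrete ℂ :=
    compl_mem_codiscrete_iff.mpr ⟨hA, isDiscrete_iff_discreteTopology.mpr hdisc⟩
  obtain ⟨H, hH, hHh⟩ := exists_differentiable_eqOn_of_injOn hcod hinf hhol hmaps
    (LeftInvOn.injOn (f₁' := g) hgh)
  obtain ⟨G, hG, hGg⟩ := exists_differentiable_eqOn_of_injOn hcod hinf ghol gmaps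
    (LeftInvOn.injOn (f₁' := h) hhg)
  have hdense := dense_of_mem_codiscrete hcod
  have hGH := leftInverse_of_eqOn_dense hdense hH.continuous hG.continuous hHh hGg hmaps hgh
  have hHG := leftInverse_of_eqOn_dense hdense hG.continuous hH.continuous hGg hHh gmaps hhg
  obtain ⟨c, b, hc, hcb⟩ := exists_eq_mul_add_of_leftInverse hH hG hGH hHG
  obtain rfl : H = fun z => c * z + b := funext hcb
  have hpre := hGH.preimage_eq_of_mapsTo_compl (hmaps.congr hHh.symm) (gmaps.congr hGg.symm)
  rcases eq_one_or_exists_iterate_eq_id hcod hinf hc hpre with rfl | ⟨n, hn, hper⟩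
  · refine ⟨b, fun hb => ?_, fun z hz => by simp [← hHh hz]⟩
    obtain ⟨z, hz, hne⟩ := hord 1 le_rfl
    exact hne (by simp [← hHh hz, hb])
  · obtain ⟨z, hz, hne⟩ := hord n hn
    exact absurd ((hHh.symm.iterate hmaps n hz).trans (congrFun hper z)) hne
end

section
/- Let A = ℤ + i·{±n^s : n = 0,1,2,…} for a fixed real s with 0 < s ≤ 1. Then d̃(0, r; A) = √2/2 for every r > 1, and consequently r / d̃(0, r; A) → +∞ as r → +∞. -/
open Metric Filter
open scoped NNReal

/-- The closed square `Q_r(z)`. -/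
def sqQ (z : ℂ) (r : ℝ) : Set ℂ := {w : ℂ | |(w - z).re| ≤ r ∧ |(w - z).im| ≤ r}

/-- `d̃(z,r;A)`: sup of `dist(w,A)` over the closed square `Q_r(z)`. -/
noncomputable def dSq (z : ℂ) (r : ℝ) (A : Set ℂ) : ℝ :=
  sSup ((fun w => infDist w A) '' sqQ z r)

/-- `A_s = ℤ + i·{± n^s : n = 0,1,2,…}`. -/
def Aset (s : ℝ) : Set ℂ :=
  {w : ℂ | ∃ (m : ℤ) (n : ℕ) (ε : ℝ), (ε = 1 ∨ ε = -1) ∧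
    w = (m : ℂ) + Complex.I * ((ε * (n : ℝ) ^ s : ℝ) : ℂ)}

lemma aux_gap {s : ℝ} (hs0 : 0 ≤ s) (hs1 : s ≤ 1) (x : ℝ) (hx : 0 ≤ x) :
    (x + 1) ^ s ≤ x ^ s + 1 := by
  have h := NNReal.rpow_add_le_add_rpow x.toNNReal 1 hs0 hs1
  have h2 := NNReal.coe_le_coe.2 h
  push_cast [NNReal.coe_rpow] at h2
  simpa [Real.coe_toNNReal x hx, Real.one_rpow] using h2

lemma aux_dense {s : ℝ} (hs0 : 0 < s) (hs1 : s ≤ 1) (t : ℝ) (ht : 0 ≤ t) :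
    ∃ n : ℕ, |t - (n : ℝ) ^ s| ≤ 1 / 2 := by
  set u := t ^ s⁻¹ with hu
  have hu0 : 0 ≤ u := Real.rpow_nonneg ht _
  set n0 := ⌊u⌋₊ with hn0
  have hle : (n0 : ℝ) ≤ u := Nat.floor_le hu0
  have hlt : u < (n0 : ℝ) + 1 := Nat.lt_floor_add_one u
  have hus : u ^ s = t := Real.rpow_inv_rpow ht hs0.ne'
  have h1 : (n0 : ℝ) ^ s ≤ t := by
    rw [← hus]; exact Real.rpow_le_rpow (by positivity) hle hs0.le
  have h2 : t < ((n0 : ℝ) + 1) ^ s := by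
    rw [← hus]; exact Real.rpow_lt_rpow hu0 hlt hs0
  have hgap : ((n0 : ℝ) + 1) ^ s ≤ (n0 : ℝ) ^ s + 1 :=
    aux_gap hs0.le hs1 _ (by positivity)
  by_cases hc : t ≤ (n0 : ℝ) ^ s + 1 / 2
  · exact ⟨n0, by rw [abs_le]; constructor <;> linarith⟩
  · refine ⟨n0 + 1, ?_⟩
    push_neg at hc
    have he : ((n0 + 1 : ℕ) : ℝ) = (n0 : ℝ) + 1 := by push_cast; ring
    rw [he, abs_le]
    constructor <;> linarith

lemma aux_sqrt_half : Real.sqrt (1 / 2) = Real.sqrt 2 / 2 := by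
  have h : ((Real.sqrt 2) / 2) ^ 2 = 1 / 2 := by
    rw [div_pow, Real.sq_sqrt (by norm_num : (0:ℝ) ≤ 2)]; norm_num
  rw [← h, Real.sqrt_sq (by positivity)]

theorem stmt5 (s : ℝ) (hs0 : 0 < s) (hs1 : s ≤ 1) :
    (∀ r : ℝ, 1 < r → dSq 0 r (Aset s) = Real.sqrt 2 / 2) ∧
      Tendsto (fun r : ℝ => r / dSq 0 r (Aset s)) atTop atTop := by
  have hAne : (Aset s).Nonempty := ⟨0, 0, 0, 1, Or.inl rfl, by simp [Real.zero_rpow hs0.ne']⟩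
  have hsqrt := aux_sqrt_half
  -- upper bound on infDist for every point
  have hub : ∀ w : ℂ, infDist w (Aset s) ≤ Real.sqrt 2 / 2 := by
    intro w
    obtain ⟨m, hm⟩ : ∃ m : ℤ, |w.re - (m : ℝ)| ≤ 1 / 2 :=
      ⟨round w.re, by simpa using (abs_sub_round w.re)⟩
    obtain ⟨n, ε, hε, hn⟩ : ∃ (n : ℕ) (ε : ℝ), (ε = 1 ∨ ε = -1) ∧
        |w.im - ε * (n : ℝ) ^ s| ≤ 1 / 2 := by
      rcases le_total 0 w.im with h | h
      · obtain ⟨n, hn⟩ := aux_dense hs0 hs1 w.im h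
        exact ⟨n, 1, Or.inl rfl, by simpa using hn⟩
      · obtain ⟨n, hn⟩ := aux_dense hs0 hs1 (-w.im) (by linarith)
        refine ⟨n, -1, Or.inr rfl, ?_⟩
        rw [show w.im - (-1) * (n:ℝ)^s = -(-w.im - (n:ℝ)^s) by ring, abs_neg]
        exact hn
    set a : ℂ := (m : ℂ) + Complex.I * ((ε * (n : ℝ) ^ s : ℝ) : ℂ) with ha
    have haA : a ∈ Aset s := ⟨m, n, ε, hε, rfl⟩
    have hre : a.re = (m : ℝ) := by simp [ha]
    have him : a.im = ε * (n : ℝ) ^ s := by simp [ha]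
    calc infDist w (Aset s) ≤ dist w a := infDist_le_dist_of_mem haA
      _ ≤ Real.sqrt 2 / 2 := by
          rw [Complex.dist_eq_re_im, hre, him, ← hsqrt]
          apply Real.sqrt_le_sqrt
          have h1 := abs_le.1 hm
          have h2 := abs_le.1 hn
          nlinarith [h1.1, h1.2, h2.1, h2.2]
  -- the witness point
  set w0 : ℂ := ((1/2 : ℝ) : ℂ) + Complex.I * ((1/2 : ℝ) : ℂ) with hw0
  have hw0re : w0.re = 1/2 := by simp [hw0]
  have hw0im : w0.im = 1/2 := by simp [hw0]
  have hwit : infDist w0 (Aset s) = Real.sqrt 2 / 2 := by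
    refine le_antisymm (hub w0) (le_of_not_gt fun hlt => ?_)
    obtain ⟨a, haA, hda⟩ := (infDist_lt_iff hAne).1 hlt
    refine absurd hda (not_lt.2 ?_)
    obtain ⟨m, n, ε, hε, rfl⟩ := haA
    rw [Complex.dist_eq_re_im]
    have hare : ((m : ℂ) + Complex.I * ((ε * (n : ℝ) ^ s : ℝ) : ℂ)).re = (m : ℝ) := by simp
    have haim : ((m : ℂ) + Complex.I * ((ε * (n : ℝ) ^ s : ℝ) : ℂ)).im = ε * (n : ℝ) ^ s := by simp
    have hre : ((1:ℝ)/2) ≤ |w0.re - ((m : ℂ) + Complex.I * ((ε * (n : ℝ) ^ s : ℝ) : ℂ)).re| := by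
      rw [hare, hw0re]
      rcases le_or_gt (m : ℝ) 0 with h | h
      · rw [abs_of_nonneg (by linarith)]; linarith
      · have : (1 : ℝ) ≤ (m : ℝ) := by exact_mod_cast h
        rw [abs_of_nonpos (by linarith)]; linarith
    have him : ((1:ℝ)/2) ≤ |w0.im - ((m : ℂ) + Complex.I * ((ε * (n : ℝ) ^ s : ℝ) : ℂ)).im| := by
      rw [haim, hw0im]
      rcases Nat.eq_zero_or_pos n with hn | hn
      · subst hn
        rw [Nat.cast_zero, Real.zero_rpow hs0.ne', mul_zero, sub_zero,
          abs_of_nonneg (by norm_num : (0:ℝ) ≤ 1/2)]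
      · have h1 : (1 : ℝ) ≤ (n : ℝ) ^ s :=
          Real.one_le_rpow (by exact_mod_cast hn) hs0.le
        rcases hε with h | h <;> subst h
        · rw [abs_of_nonpos (by linarith)]; linarith
        · rw [abs_of_nonneg (by nlinarith)]; nlinarith
    rw [← hsqrt]
    apply Real.sqrt_le_sqrt
    nlinarith [hre, him,
      sq_abs (w0.re - ((m : ℂ) + Complex.I * ((ε * (n : ℝ) ^ s : ℝ) : ℂ)).re),
      sq_abs (w0.im - ((m : ℂ) + Complex.I * ((ε * (n : ℝ) ^ s : ℝ) : ℂ)).im),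
      abs_nonneg (w0.re - ((m : ℂ) + Complex.I * ((ε * (n : ℝ) ^ s : ℝ) : ℂ)).re),
      abs_nonneg (w0.im - ((m : ℂ) + Complex.I * ((ε * (n : ℝ) ^ s : ℝ) : ℂ)).im)]
  have hmain : ∀ r : ℝ, 1 < r → dSq 0 r (Aset s) = Real.sqrt 2 / 2 := by
    intro r hr
    have hw0mem : w0 ∈ sqQ 0 r := by
      constructor
      · rw [sub_zero, hw0re, abs_of_nonneg (by norm_num)]; linarith
      · rw [sub_zero, hw0im, abs_of_nonneg (by norm_num)]; linarith
    have hbdd : BddAbove ((fun w => infDist w (Aset s)) '' sqQ 0 r) := by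
      refine ⟨Real.sqrt 2 / 2, ?_⟩
      rintro x ⟨w, _, rfl⟩
      exact hub w
    refine le_antisymm ?_ ?_
    · apply Real.sSup_le
      · rintro x ⟨w, _, rfl⟩
        exact hub w
      · positivity
    · rw [← hwit]
      exact le_csSup hbdd ⟨w0, hw0mem, rfl⟩
  refine ⟨hmain, ?_⟩
  have hpos : (0:ℝ) < Real.sqrt 2 / 2 := by positivity
  have hT : Tendsto (fun r : ℝ => r / (Real.sqrt 2 / 2)) atTop atTop :=
    Tendsto.atTop_div_const hpos tendsto_id
  refine hT.congr' ?_
  filter_upwards [eventually_gt_atTop (1:ℝ)] with r hr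
  rw [hmain r hr]
end

section
/- Let s > 1 and A_s = ℤ + i·{±n^s : n = 0,1,2,…}. Then for every natural number n ≥ 1, (2·d̃(0, n^s; A_s))² = (n^s - (n-1)^s)² + 1, and consequently n^s / d̃(0, n^s; A_s) → +∞ as n → ∞. -/
open Metric Filter
open Set Real

lemma gap_mono {s : ℝ} (hs : 1 ≤ s) {a b : ℝ} (ha : 1 ≤ a) (hab : a ≤ b) :
    a ^ s - (a - 1) ^ s ≤ b ^ s - (b - 1) ^ s := by
  rcases eq_or_lt_of_le hab with rfl | hab
  · exact le_refl _
  have hcv := convexOn_rpow hs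
  have ma1 : a - 1 ∈ Ici (0:ℝ) := by simp; linarith
  have mb1 : b - 1 ∈ Ici (0:ℝ) := by simp; linarith
  have ma : a ∈ Ici (0:ℝ) := by simp; linarith
  have mb : b ∈ Ici (0:ℝ) := by simp; linarith
  have h1 : (a ^ s - (a-1) ^ s) / (a - (a-1)) ≤ (b ^ s - (a-1) ^ s) / (b - (a-1)) :=
    hcv.secant_mono ma1 ma mb (by intro h; linarith) (by intro h; linarith) hab.le
  have h2 : ((a-1) ^ s - b ^ s) / ((a-1) - b) ≤ ((b-1) ^ s - b ^ s) / ((b-1) - b) :=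
    hcv.secant_mono mb ma1 mb1 (by intro h; linarith) (by intro h; linarith) (by linarith)
  have d1 : a - (a-1) = 1 := by ring
  have d2 : (b-1) - b = -1 := by ring
  rw [d1, div_one] at h1
  rw [d2] at h2
  have e1 : ((a-1) ^ s - b ^ s) / ((a-1) - b) = (b ^ s - (a-1) ^ s) / (b - (a-1)) := by
    rw [← neg_div_neg_eq]; ring_nf
  rw [e1] at h2
  have e2 : ((b-1) ^ s - b ^ s) / (-1 : ℝ) = b ^ s - (b-1) ^ s := by ring
  rw [e2] at h2
  linarith

lemma near_level {s : ℝ} (hs : 1 < s) (n : ℕ) (hn : 1 ≤ n) :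
    ∀ t : ℝ, 0 ≤ t → t ≤ (n:ℝ) ^ s →
    ∃ k : ℕ, |t - (k:ℝ) ^ s| ≤ ((n:ℝ) ^ s - ((n:ℝ) - 1) ^ s) / 2 := by
  induction n, hn using Nat.le_induction with
  | base =>
    intro t ht0 ht1
    simp only [Nat.cast_one, one_rpow, sub_self, Real.zero_rpow (by linarith : s ≠ 0)] at *
    rcases le_or_gt t (1/2) with h | h
    · exact ⟨0, by simpa [Real.zero_rpow (by linarith : s ≠ 0)] using abs_le.mpr ⟨by linarith, by linarith⟩⟩
    · exact ⟨1, by simp only [Nat.cast_one, one_rpow]; exact abs_le.mpr ⟨by linarith, by linarith⟩⟩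
  | succ n hn ih =>
    intro t ht0 htn
    have hcast : ((n:ℝ) + 1) - 1 = (n:ℝ) := by ring
    have hn1 : (1:ℝ) ≤ (n:ℝ) := by exact_mod_cast hn
    rcases le_or_gt t ((n:ℝ) ^ s) with h | h
    · obtain ⟨k, hk⟩ := ih t ht0 h
      refine ⟨k, hk.trans ?_⟩
      have := gap_mono hs.le hn1 (by linarith : (n:ℝ) ≤ (n:ℝ) + 1)
      rw [hcast] at this
      push_cast
      rw [hcast]
      linarith
    · push_cast at htn ⊢
      rw [hcast]
      set g := ((n:ℝ) + 1) ^ s - (n:ℝ) ^ s with hg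
      rcases le_or_gt t ((n:ℝ) ^ s + g / 2) with h2 | h2
      · exact ⟨n, abs_le.mpr ⟨by linarith, by linarith⟩⟩
      · refine ⟨n + 1, ?_⟩
        push_cast
        exact abs_le.mpr ⟨by linarith, by linarith⟩


lemma sqrt_quarter {g : ℝ} : Real.sqrt (1/4 + g^2/4) = Real.sqrt (g^2 + 1) / 2 := by
  have : (1/4 + g^2/4 : ℝ) = (g^2+1)/4 := by ring
  rw [this, show (4:ℝ) = 2^2 by norm_num, Real.sqrt_div (by positivity),
    Real.sqrt_sq (by norm_num : (0:ℝ) ≤ 2)]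

lemma ub {s : ℝ} (hs : 1 < s) {n : ℕ} (hn : 1 ≤ n) {w : ℂ}
    (hw : w ∈ sqQ 0 ((n:ℝ) ^ s)) :
    infDist w (Aset s) ≤ Real.sqrt (((n:ℝ) ^ s - ((n:ℝ) - 1) ^ s) ^ 2 + 1) / 2 := by
  obtain ⟨hre, him⟩ := hw
  simp only [sub_zero] at hre him
  set g := (n:ℝ) ^ s - ((n:ℝ) - 1) ^ s with hgdef
  obtain ⟨k, hk⟩ := near_level hs n hn |w.im| (abs_nonneg _) him
  set ε : ℝ := if 0 ≤ w.im then 1 else -1 with hε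
  set p : ℂ := ((round w.re : ℤ) : ℂ) + Complex.I * ((ε * (k:ℝ) ^ s : ℝ) : ℂ) with hp
  have hpA : p ∈ Aset s := ⟨round w.re, k, ε, by rw [hε]; split <;> simp, rfl⟩
  have hpre : p.re = (round w.re : ℝ) := by simp [hp]
  have hpim : p.im = ε * (k:ℝ) ^ s := by simp [hp]
  refine (infDist_le_dist_of_mem hpA).trans ?_
  rw [Complex.dist_eq_re_im, hpre, hpim]
  have h1 : (w.re - (round w.re : ℝ)) ^ 2 ≤ 1/4 := by
    have := abs_sub_round w.re
    have h := abs_le.mp this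
    nlinarith
  have h2 : (w.im - ε * (k:ℝ) ^ s) ^ 2 = (|w.im| - (k:ℝ) ^ s) ^ 2 := by
    rw [hε]; split
    · rw [abs_of_nonneg (by assumption)]; ring
    · rw [abs_of_neg (by linarith [lt_of_not_ge (by assumption : ¬ 0 ≤ w.im)])]; ring
  have h3 : (|w.im| - (k:ℝ) ^ s) ^ 2 ≤ (g/2) ^ 2 := by
    have h := abs_le.mp hk
    nlinarith
  calc Real.sqrt ((w.re - (round w.re:ℝ))^2 + (w.im - ε * (k:ℝ)^s)^2)
      ≤ Real.sqrt (1/4 + g^2/4) := by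
        apply Real.sqrt_le_sqrt; rw [h2]; nlinarith
    _ = Real.sqrt (g^2 + 1) / 2 := sqrt_quarter

set_option maxHeartbeats 1000000 in
lemma lb {s : ℝ} (hs : 1 < s) {n : ℕ} (hn : 1 ≤ n) {a : ℂ} (ha : a ∈ Aset s) :
    Real.sqrt (((n:ℝ) ^ s - ((n:ℝ) - 1) ^ s) ^ 2 + 1) / 2 ≤
      dist ((1/2 : ℂ) + Complex.I * (((((n:ℝ)-1)^s + (n:ℝ)^s)/2 : ℝ) : ℂ)) a := by
  obtain ⟨m, k, ε, hεor, rfl⟩ := ha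
  set g := (n:ℝ) ^ s - ((n:ℝ) - 1) ^ s with hgdef
  set mid := ((((n:ℝ)-1)^s + (n:ℝ)^s)/2 : ℝ) with hmid
  have hn1 : (1:ℝ) ≤ (n:ℝ) := by exact_mod_cast hn
  have hn0 : (0:ℝ) ≤ (n:ℝ) - 1 := by linarith
  have hg0 : 0 ≤ g := by
    have := Real.rpow_le_rpow hn0 (by linarith : (n:ℝ) - 1 ≤ (n:ℝ)) (by linarith : (0:ℝ) ≤ s)
    simpa [hgdef] using by linarith
  have hsub0 : (0:ℝ) ≤ ((n:ℝ)-1)^s := Real.rpow_nonneg hn0 s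
  have hmidg : g/2 ≤ mid := by simp only [hmid, hgdef]; linarith
  have wre : ((1/2 : ℂ) + Complex.I * (mid : ℂ)).re = 1/2 := by simp
  have wim : ((1/2 : ℂ) + Complex.I * (mid : ℂ)).im = mid := by simp
  have are : (((m:ℤ) : ℂ) + Complex.I * ((ε * (k:ℝ) ^ s : ℝ) : ℂ)).re = (m:ℝ) := by simp
  have aim : (((m:ℤ) : ℂ) + Complex.I * ((ε * (k:ℝ) ^ s : ℝ) : ℂ)).im = ε * (k:ℝ)^s := by simp
  rw [Complex.dist_eq_re_im, wre, wim, are, aim]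
  have h1 : (1/4 : ℝ) ≤ (1/2 - (m:ℝ))^2 := by
    rcases le_or_gt (m:ℤ) 0 with h | h
    · have : (m:ℝ) ≤ 0 := by exact_mod_cast h
      nlinarith
    · have : (1:ℝ) ≤ (m:ℝ) := by exact_mod_cast h
      nlinarith
  have h2 : (g/2)^2 ≤ (mid - ε * (k:ℝ)^s)^2 := by
    have hk0 : (0:ℝ) ≤ (k:ℝ)^s := Real.rpow_nonneg (Nat.cast_nonneg k) s
    rcases hεor with rfl | rfl
    · rcases le_or_gt k (n-1) with hkn | hkn
      · have hkr : (k:ℝ) ≤ (n:ℝ) - 1 := by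
          have : k + 1 ≤ n := by omega
          have := (Nat.cast_le (α := ℝ)).mpr this
          push_cast at this; linarith
        have : (k:ℝ)^s ≤ ((n:ℝ)-1)^s :=
          Real.rpow_le_rpow (Nat.cast_nonneg k) hkr (by linarith)
        have hge : g/2 ≤ mid - 1 * (k:ℝ)^s := by simp only [hmid, hgdef]; linarith
        nlinarith
      · have hkr : (n:ℝ) ≤ (k:ℝ) := by exact_mod_cast (by omega : n ≤ k)
        have : (n:ℝ)^s ≤ (k:ℝ)^s := Real.rpow_le_rpow (by linarith) hkr (by linarith)
        have hge : g/2 ≤ 1 * (k:ℝ)^s - mid := by simp only [hmid, hgdef]; linarith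
        nlinarith
    · have hge : g/2 ≤ mid - (-1) * (k:ℝ)^s := by nlinarith
      nlinarith
  calc Real.sqrt (g^2 + 1) / 2 = Real.sqrt (1/4 + g^2/4) := sqrt_quarter.symm
    _ ≤ Real.sqrt ((1/2 - (m:ℝ))^2 + (mid - ε * (k:ℝ)^s)^2) := by
        apply Real.sqrt_le_sqrt; nlinarith

lemma Aset_nonempty (s : ℝ) (hs : 1 < s) : (Aset s).Nonempty := by
  refine ⟨0, 0, 0, 1, Or.inl rfl, ?_⟩
  simp [Real.zero_rpow (by linarith : s ≠ 0)]

lemma dSq_eq {s : ℝ} (hs : 1 < s) {n : ℕ} (hn : 1 ≤ n) :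
    dSq 0 ((n:ℝ) ^ s) (Aset s) =
      Real.sqrt (((n:ℝ) ^ s - ((n:ℝ) - 1) ^ s) ^ 2 + 1) / 2 := by
  set g := (n:ℝ) ^ s - ((n:ℝ) - 1) ^ s with hgdef
  set c := Real.sqrt (g ^ 2 + 1) / 2 with hc
  have hn1 : (1:ℝ) ≤ (n:ℝ) := by exact_mod_cast hn
  have hn0 : (0:ℝ) ≤ (n:ℝ) - 1 := by linarith
  have hns1 : (1:ℝ) ≤ (n:ℝ) ^ s := by
    calc (1:ℝ) = (1:ℝ) ^ s := (Real.one_rpow s).symm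
    _ ≤ (n:ℝ) ^ s := Real.rpow_le_rpow (by norm_num) hn1 (by linarith)
  have hsub0 : (0:ℝ) ≤ ((n:ℝ)-1)^s := Real.rpow_nonneg hn0 s
  have hsuble : ((n:ℝ)-1)^s ≤ (n:ℝ)^s :=
    Real.rpow_le_rpow hn0 (by linarith) (by linarith)
  set mid := ((((n:ℝ)-1)^s + (n:ℝ)^s)/2 : ℝ) with hmid
  have hw0 : ((1/2 : ℂ) + Complex.I * (mid : ℂ)) ∈ sqQ 0 ((n:ℝ)^s) := by
    constructor
    · simp only [sub_zero]
      rw [show ((1/2 : ℂ) + Complex.I * (mid : ℂ)).re = 1/2 by simp]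
      rw [abs_of_nonneg (by norm_num)]; linarith
    · simp only [sub_zero]
      rw [show ((1/2 : ℂ) + Complex.I * (mid : ℂ)).im = mid by simp]
      rw [abs_of_nonneg (by simp only [hmid]; linarith)]
      simp only [hmid]; linarith
  have hbdd : BddAbove ((fun w => infDist w (Aset s)) '' sqQ 0 ((n:ℝ)^s)) := by
    refine ⟨c, ?_⟩
    rintro x ⟨w, hw, rfl⟩
    exact ub hs hn hw
  apply le_antisymm
  · apply Real.sSup_le _ (by positivity)
    rintro x ⟨w, hw, rfl⟩
    exact ub hs hn hw
  · refine le_trans ?_ (le_csSup hbdd ⟨_, hw0, rfl⟩)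
    by_contra hcon
    push_neg at hcon
    obtain ⟨y, hy, hlt⟩ := (infDist_lt_iff (Aset_nonempty s hs)).mp hcon
    exact absurd (lb hs hn hy) (not_le.mpr hlt)

theorem stmt6 (s : ℝ) (hs : 1 < s) :
    (∀ n : ℕ, 1 ≤ n →
      (2 * dSq 0 ((n : ℝ) ^ s) (Aset s)) ^ 2 =
        ((n : ℝ) ^ s - ((n : ℝ) - 1) ^ s) ^ 2 + 1) ∧
    Tendsto (fun n : ℕ => (n : ℝ) ^ s / dSq 0 ((n : ℝ) ^ s) (Aset s)) atTop atTop := by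
  have part1 : ∀ n : ℕ, 1 ≤ n →
      (2 * dSq 0 ((n : ℝ) ^ s) (Aset s)) ^ 2 =
        ((n : ℝ) ^ s - ((n : ℝ) - 1) ^ s) ^ 2 + 1 := by
    intro n hn
    rw [dSq_eq hs hn, mul_div_cancel₀ _ (by norm_num : (2:ℝ) ≠ 0)]
    exact Real.sq_sqrt (by positivity)
  refine ⟨part1, ?_⟩
  have key : ∀ n : ℕ, 1 ≤ n →
      2 / (s+1) * (n:ℝ) ≤ (n:ℝ) ^ s / dSq 0 ((n : ℝ) ^ s) (Aset s) := by
    intro n hn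
    have hn1 : (1:ℝ) ≤ (n:ℝ) := by exact_mod_cast hn
    have hnpos : (0:ℝ) < (n:ℝ) := by linarith
    set g := (n:ℝ) ^ s - ((n:ℝ) - 1) ^ s with hgdef
    have hg0 : 0 ≤ g := by
      have := Real.rpow_le_rpow (by linarith : (0:ℝ) ≤ (n:ℝ)-1)
        (by linarith : (n:ℝ)-1 ≤ (n:ℝ)) (by linarith : (0:ℝ) ≤ s)
      simp only [hgdef]; linarith
    have hnne : (n:ℝ) ≠ 0 := ne_of_gt hnpos
    have hfrac : (0:ℝ) ≤ 1 + (-1/(n:ℝ)) := by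
      have h' : -1/(n:ℝ) = -(1/(n:ℝ)) := neg_div _ _
      have : 1/(n:ℝ) ≤ 1 := by
        rw [div_le_one hnpos]; exact hn1
      rw [h']; linarith
    have h1 : (1:ℝ) + s * (-1/(n:ℝ)) ≤ (1 + (-1/(n:ℝ)))^s :=
      one_add_mul_self_le_rpow_one_add (by
        rw [neg_div]
        have : 1/(n:ℝ) ≤ 1 := by rw [div_le_one hnpos]; exact hn1
        linarith) hs.le
    have e1 : ((n:ℝ)) * (1 + (-1/(n:ℝ))) = (n:ℝ) - 1 := by field_simp; ring
    have e2 : (n:ℝ)^s * (1 + (-1/(n:ℝ)))^s = ((n:ℝ)-1)^s := by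
      rw [← Real.mul_rpow hnpos.le hfrac, e1]
    have e3 : (n:ℝ)^(s-1) = (n:ℝ)^s / (n:ℝ) := by
      rw [Real.rpow_sub hnpos, Real.rpow_one]
    have hbern : (n:ℝ)^s - s * (n:ℝ)^(s-1) ≤ ((n:ℝ)-1)^s := by
      have hmul := mul_le_mul_of_nonneg_left h1 (Real.rpow_nonneg hnpos.le s)
      rw [e2] at hmul
      have e4 : (n:ℝ)^s * (1 + s * (-1/(n:ℝ))) = (n:ℝ)^s - s * ((n:ℝ)^s/(n:ℝ)) := by
        field_simp; ring
      rw [e3]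
      linarith [e4 ▸ hmul]
    have hpow1 : (1:ℝ) ≤ (n:ℝ)^(s-1) := by
      calc (1:ℝ) = (1:ℝ)^(s-1) := (Real.one_rpow _).symm
      _ ≤ (n:ℝ)^(s-1) := Real.rpow_le_rpow (by norm_num) hn1 (by linarith)
    have hsq : Real.sqrt (g^2+1) ≤ (s+1)*(n:ℝ)^(s-1) := by
      have hgb : g ≤ s * (n:ℝ)^(s-1) := by simp only [hgdef]; linarith
      calc Real.sqrt (g^2+1) ≤ Real.sqrt ((g+1)^2) := by
            apply Real.sqrt_le_sqrt; nlinarith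
        _ = g + 1 := Real.sqrt_sq (by linarith)
        _ ≤ s * (n:ℝ)^(s-1) + (n:ℝ)^(s-1) := by linarith
        _ = (s+1)*(n:ℝ)^(s-1) := by ring
    have hDpos : 0 < dSq 0 ((n:ℝ)^s) (Aset s) := by
      rw [dSq_eq hs hn]
      have : (0:ℝ) < Real.sqrt (g^2+1) := Real.sqrt_pos.mpr (by positivity)
      simp only [← hgdef]
      linarith
    have hD : dSq 0 ((n:ℝ)^s) (Aset s) ≤ (s+1)*(n:ℝ)^(s-1)/2 := by
      rw [dSq_eq hs hn]
      simp only [← hgdef]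
      linarith
    have hpowne : (n:ℝ)^(s-1) ≠ 0 := by positivity
    have hs1ne : s + 1 ≠ 0 := by linarith
    have e5 : (n:ℝ)^s = (n:ℝ)*(n:ℝ)^(s-1) := by rw [e3]; field_simp
    have h4 : (n:ℝ)^s / ((s+1)*(n:ℝ)^(s-1)/2) = 2/(s+1)*(n:ℝ) := by
      rw [e5]; field_simp
    calc 2/(s+1)*(n:ℝ) = (n:ℝ)^s / ((s+1)*(n:ℝ)^(s-1)/2) := h4.symm
      _ ≤ (n:ℝ)^s / dSq 0 ((n:ℝ)^s) (Aset s) :=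
          div_le_div_of_nonneg_left (Real.rpow_nonneg hnpos.le s) hDpos hD
  have hc : Tendsto (fun n : ℕ => 2/(s+1)*(n:ℝ)) atTop atTop :=
    Tendsto.const_mul_atTop (by positivity : (0:ℝ) < 2/(s+1)) tendsto_natCast_atTop_atTop
  exact tendsto_atTop_mono' atTop (eventually_atTop.mpr ⟨1, fun n hn => key n hn⟩) hc
end

section
/- Let A ⊂ ℂ be closed, discrete, and infinite, with z + 1 an automorphism of ℂ \ A (i.e., A + 1 = A) such that the strip S = {x + iy : 0 ≤ x < 1} meets A in infinitely many points. If f: ℂ → ℂ is a homeomorphism with f(ℤ) = A, then sup_{a ∈ A} |f⁻¹(a) - f⁻¹(a-1)| = +∞. -/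
/-!
Suppose `dist (f⁻¹ a) (f⁻¹ (a - 1)) ≤ M` for all `a ∈ A`, and put `C = ⌈M⌉₊`. For each point `a` of
`A` in the strip, `k ↦ f⁻¹ (a + k)` is an injective walk in `ℤ` with steps of length at most `C`,
and the walks of distinct strip points never meet, since their orbits `a + ℤ` are disjoint. An
injective walk starting in `[-R, R]` leaves this interval, so it lands in one of the two windows
`±[R, R + C]`, which together hold only `2C + 2` integers. Taking `R` large enough for `2C + 3` strip
points gives two walks meeting at the same integer.
-/

open Finset Function

lemma exists_apply_mem_Icc_of_le_add {v : ℕ → ℤ} {C : ℕ} {R : ℤ} (hstep : ∀ n, v (n + 1) ≤ v n + C)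
    (h0 : v 0 ≤ R) {m : ℕ} (hm : R ≤ v m) : ∃ j, v j ∈ Icc R (R + C) := by
  induction m with
  | zero => exact ⟨0, mem_Icc.2 ⟨hm, by have := hstep 0; omega⟩⟩
  | succ n ih =>
    rcases le_or_gt R (v n) with h | h
    · exact ih h
    · exact ⟨n + 1, mem_Icc.2 ⟨hm, by have := hstep n; omega⟩⟩

lemma exists_apply_mem_Icc_of_abs_sub_le {w : ℤ → ℤ} {C : ℕ} {R : ℤ}
    (hstep : ∀ k, |w (k + 1) - w k| ≤ C) (h0 : w 0 ≤ R) {k : ℤ} (hk : R ≤ w k) :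
    ∃ j, w j ∈ Icc R (R + C) := by
  wlog hk0 : 0 ≤ k generalizing w k
  · obtain ⟨j, hj⟩ := this (w := fun i => w (-i)) (k := -k)
      (fun i => by rw [abs_sub_comm, neg_add, ← sub_eq_add_neg]; simpa using hstep (-i - 1))
      (by simpa using h0) (by simpa using hk) (by omega)
    exact ⟨-j, hj⟩
  lift k to ℕ using hk0
  obtain ⟨j, hj⟩ := exists_apply_mem_Icc_of_le_add (v := fun n : ℕ => w n) (C := C)
    (fun n => by have := abs_le.1 (hstep n); push_cast; omega) (by simpa using h0) hk
  exact ⟨j, hj⟩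

lemma exists_abs_apply_mem_Icc_of_injective {u : ℤ → ℤ} {C : ℕ} {R : ℤ} (hu : Injective u)
    (hstep : ∀ k, |u (k + 1) - u k| ≤ C) (h0 : |u 0| ≤ R) : ∃ j, |u j| ∈ Icc R (R + C) := by
  obtain ⟨k, hk⟩ : ∃ k, u k ∉ Set.Icc (-R) R := by
    by_contra! h
    exact Set.infinite_range_of_injective hu ((Set.finite_Icc (-R) R).subset (by grind))
  rw [Set.mem_Icc, not_and_or, not_le, not_le] at hk
  exact exists_apply_mem_Icc_of_abs_sub_le (w := fun k => |u k|)
    (fun k => (abs_abs_sub_abs_le_abs_sub _ _).trans (hstep k)) h0 (k := k)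
    (by rcases abs_cases (u k) with h | h <;> omega)

lemma card_le_of_injective_walks {α : Type*} {t : Finset α} {u : α → ℤ → ℤ} {C : ℕ}
    (hinj : ∀ a ∈ t, Injective (u a)) (hstep : ∀ a ∈ t, ∀ k, |u a (k + 1) - u a k| ≤ C)
    (hdisj : ∀ a ∈ t, ∀ b ∈ t, ∀ k j, u a k = u b j → a = b) : #t ≤ 2 * C + 2 := by
  obtain ⟨R, hR⟩ := (t.image fun a => |u a 0|).exists_le
  have hit : ∀ a ∈ t, ∃ j, |u a j| ∈ Icc R (R + C) := fun a ha =>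
    exists_abs_apply_mem_Icc_of_injective (hinj a ha) (hstep a ha) (hR _ (mem_image_of_mem _ ha))
  choose! j hj using hit
  have hmaps : ∀ a ∈ t, u a (j a) ∈ Icc (-(R + C)) (-R) ∪ Icc R (R + C) := by
    intro a ha
    have := mem_Icc.1 (hj a ha)
    simp only [mem_union, mem_Icc]
    rcases abs_cases (u a (j a)) with h | h <;> omega
  calc #t ≤ #(Icc (-(R + C)) (-R) ∪ Icc R (R + C)) :=
        card_le_card_of_injOn _ hmaps fun a ha b hb hab => hdisj a ha b hb _ _ hab
    _ ≤ #(Icc (-(R + C)) (-R)) + #(Icc R (R + C)) := card_union_le _ _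
    _ = 2 * C + 2 := by rw [Int.card_Icc, Int.card_Icc]; omega

lemma add_zsmul_mem_of_image_add_eq {G : Type*} [AddGroup G] {A : Set G} {g : G}
    (h : (fun x => x + g) '' A = A) {a : G} (ha : a ∈ A) (k : ℤ) : a + k • g ∈ A := by
  have hiff : ∀ x, x + g ∈ A ↔ x ∈ A := fun x =>
    ⟨fun hx => by obtain ⟨y, hy, hyx⟩ := h.symm ▸ hx; rwa [← add_right_cancel hyx],
      fun hx => h ▸ Set.mem_image_of_mem _ hx⟩
  induction k using Int.induction_on with
  | zero => simpa using ha
  | succ n ih => rwa [add_zsmul, one_zsmul, ← add_assoc, hiff]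
  | pred n ih => rwa [← hiff, sub_zsmul, one_zsmul, ← add_assoc, neg_add_cancel_right]

lemma eq_of_add_intCast_eq_add_intCast {a b : ℂ} (ha : 0 ≤ a.re ∧ a.re < 1)
    (hb : 0 ≤ b.re ∧ b.re < 1) {k j : ℤ} (h : a + k = b + j) : a = b := by
  have hkj : k = j := by
    have := congrArg (fun z : ℂ => ⌊z.re⌋) h
    simp only [Complex.add_re, Complex.intCast_re, Int.floor_add_intCast,
      Int.floor_eq_zero_iff.2 ha, Int.floor_eq_zero_iff.2 hb] at this
    omega
  subst hkj
  exact add_right_cancel h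

theorem stmt9_general (A : Set ℂ)
    (hperiod : (fun z => z + 1) '' A = A)
    (hstrip : {a ∈ A | 0 ≤ a.re ∧ a.re < 1}.Infinite)
    (f : ℂ ≃ₜ ℂ) (hf : f '' (Set.range ((↑) : ℤ → ℂ)) = A) :
    ∀ M : ℝ, ∃ a ∈ A, M < dist (f.symm a) (f.symm (a - 1)) := by
  intro M
  by_contra! hM
  have hmem : ∀ a ∈ A, ∀ k : ℤ, a + k ∈ A := fun a ha k => by
    simpa using add_zsmul_mem_of_image_add_eq hperiod ha k
  have hpull : ∀ a ∈ A, ∀ k : ℤ, ∃ n : ℤ, (n : ℂ) = f.symm (a + k) := fun a ha k => by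
    obtain ⟨_, ⟨n, rfl⟩, hn⟩ := hf ▸ hmem a ha k
    exact ⟨n, by rw [← hn, f.symm_apply_apply]⟩
  choose! u hu using hpull
  have hinj : ∀ a ∈ A, Injective (u a) := fun a ha k j hkj =>
    Int.cast_injective (add_left_cancel (f.symm.injective (by rw [← hu a ha, hkj, hu a ha])))
  have hstep : ∀ a ∈ A, ∀ k, |u a (k + 1) - u a k| ≤ (⌈M⌉₊ : ℤ) := fun a ha k => by
    have hdist := hM _ (hmem a ha (k + 1))
    rw [show a + ((k + 1 : ℤ) : ℂ) - 1 = a + k by push_cast; ring, ← hu a ha, ← hu a ha,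
      Complex.dist_eq, ← Int.cast_sub, Complex.norm_intCast] at hdist
    exact_mod_cast hdist.trans (Nat.le_ceil M)
  obtain ⟨t, hts, htc⟩ := hstrip.exists_subset_card_eq (2 * ⌈M⌉₊ + 3)
  have hcard := card_le_of_injective_walks (t := t) (u := u)
    (fun a ha => hinj a (hts ha).1) (fun a ha => hstep a (hts ha).1)
    (fun a ha b hb k j hab => eq_of_add_intCast_eq_add_intCast (hts ha).2 (hts hb).2
      (f.symm.injective (by rw [← hu a (hts ha).1, ← hu b (hts hb).1, hab])))
  omega

theorem stmt9 (A : Set ℂ) (hA : IsClosed A) (hdisc : DiscreteTopology A)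
    (hinf : A.Infinite)
    (hperiod : (fun z => z + 1) '' A = A)
    (hstrip : {a ∈ A | 0 ≤ a.re ∧ a.re < 1}.Infinite)
    (f : ℂ ≃ₜ ℂ) (hf : f '' (Set.range ((↑) : ℤ → ℂ)) = A) :
    ∀ M : ℝ, ∃ a ∈ A, M < dist (f.symm a) (f.symm (a - 1)) :=
  stmt9_general A hperiod hstrip f hf
end
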